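/- arXiv:1007.0832 — 6 statements merged into one kernel-verified Lean document; each statement's English description precedes it below -/
import Mathlib

section
/- Let $D$ be a symmetric $n\times n$ matrix with zero diagonal, and let $p, q$ be two strictly positive probability distributions on $\{1,\dots,n\}$. Let $H^{(p)}$ be the centering matrix with entries $h_{ij} = \delta_{ij} - p_j$, and $B^{(p)} = -\frac{1}{2} H^{(p)} D (H^{(p)})'$. Then $B^{(p)}$ is positive semi-definite if and only if $B^{(q)}$ is positive semi-definite. (The squared Euclidean character of $D$ is independent of the choice of weights.) -/
open BigOperators Matrix

/-!
Writing `H p = 1 - 𝟙 pᵀ`, we get `H q * H p = H q` as soon as `qᵀ 𝟙 = 1`, whatever `p` is. Hence `B q = H q * B p * (H q)ᵀ`, a congruence of `B p`, and congruence preserves positive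
semidefiniteness; by symmetry the converse holds too.
-/

namespace Matrix

section Centering

variable {ι R : Type*} [DecidableEq ι] [CommRing R]

def centeringMatrix (p : ι → R) : Matrix ι ι R :=
  1 - vecMulVec 1 p

theorem centeringMatrix_apply (p : ι → R) (i j : ι) :
    centeringMatrix p i j = (if i = j then 1 else 0) - p j := by
  simp [centeringMatrix, one_apply]

theorem centeringMatrix_mul_centeringMatrix [Fintype ι] (p : ι → R) {q : ι → R} (hq : ∑ i, q i = 1) :
    centeringMatrix q * centeringMatrix p = centeringMatrix q := by
  simp only [centeringMatrix, sub_mul, mul_sub, Matrix.one_mul, Matrix.mul_one,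
    vecMulVec_mul_vecMulVec, dotProduct_one, hq, one_smul]
  abel

end Centering

theorem mul_mul_transpose_of_mul_eq {ι R : Type*} [Fintype ι] [CommRing R]
    {A C : Matrix ι ι R} (h : C * A = C) (D : Matrix ι ι R) :
    C * (A * D * Aᵀ) * Cᵀ = C * D * Cᵀ := by
  have hT : Aᵀ * Cᵀ = Cᵀ := by rw [← transpose_mul, h]
  calc C * (A * D * Aᵀ) * Cᵀ = C * A * D * (Aᵀ * Cᵀ) := by simp only [Matrix.mul_assoc]
    _ = C * D * Cᵀ := by rw [h, hT]

section ScalarProduct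

variable {ι : Type*} [Fintype ι] [DecidableEq ι]

noncomputable def scalarProductMatrix (D : Matrix ι ι ℝ) (p : ι → ℝ) : Matrix ι ι ℝ :=
  (-(1 / 2) : ℝ) • (centeringMatrix p * D * (centeringMatrix p)ᵀ)

theorem scalarProductMatrix_eq_mul_mul_transpose (D : Matrix ι ι ℝ) (p : ι → ℝ) {q : ι → ℝ}
    (hq : ∑ i, q i = 1) :
    scalarProductMatrix D q =
      centeringMatrix q * scalarProductMatrix D p * (centeringMatrix q)ᵀ := by
  rw [scalarProductMatrix, scalarProductMatrix, Matrix.mul_smul, Matrix.smul_mul,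
    mul_mul_transpose_of_mul_eq (centeringMatrix_mul_centeringMatrix p hq)]

theorem PosSemidef.scalarProductMatrix_of_sum_eq_one {D : Matrix ι ι ℝ} {p q : ι → ℝ}
    (hp : (scalarProductMatrix D p).PosSemidef) (hq : ∑ i, q i = 1) :
    (scalarProductMatrix D q).PosSemidef := by
  rw [scalarProductMatrix_eq_mul_mul_transpose D p hq, ← conjTranspose_eq_transpose_of_trivial]
  exact hp.mul_mul_conjTranspose_same _

end ScalarProduct

end Matrix

theorem euclidean_character_weight_independent_general {n : ℕ}
    (D : Matrix (Fin n) (Fin n) ℝ)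
    (p q : Fin n → ℝ)
    (hps : ∑ i, p i = 1)
    (hqs : ∑ i, q i = 1)
    (Hp Hq : Matrix (Fin n) (Fin n) ℝ)
    (hHp : Hp = Matrix.of fun i j => (if i = j then (1 : ℝ) else 0) - p j)
    (hHq : Hq = Matrix.of fun i j => (if i = j then (1 : ℝ) else 0) - q j)
    (Bp Bq : Matrix (Fin n) (Fin n) ℝ)
    (hBp : Bp = (-(1 / 2) : ℝ) • (Hp * D * Hpᵀ))
    (hBq : Bq = (-(1 / 2) : ℝ) • (Hq * D * Hqᵀ)) :
    Bp.PosSemidef ↔ Bq.PosSemidef := by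
  have hHp' : Hp = centeringMatrix p := by ext i j; simp [hHp, centeringMatrix_apply]
  have hHq' : Hq = centeringMatrix q := by ext i j; simp [hHq, centeringMatrix_apply]
  have hBp' : Bp = scalarProductMatrix D p := by rw [hBp, hHp', scalarProductMatrix]
  have hBq' : Bq = scalarProductMatrix D q := by rw [hBq, hHq', scalarProductMatrix]
  rw [hBp', hBq']
  exact ⟨fun h => h.scalarProductMatrix_of_sum_eq_one hqs,
    fun h => h.scalarProductMatrix_of_sum_eq_one hps⟩

/-- The squared Euclidean character of a dissimilarity matrix `D` is independent
of the choice of the (positive) weight distribution used for centering. -/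
theorem euclidean_character_weight_independent {n : ℕ}
    (D : Matrix (Fin n) (Fin n) ℝ) (hDsym : D.IsSymm) (hDdiag : ∀ i, D i i = 0)
    (p q : Fin n → ℝ)
    (hp : ∀ i, 0 < p i) (hps : ∑ i, p i = 1)
    (hq : ∀ i, 0 < q i) (hqs : ∑ i, q i = 1)
    (Hp Hq : Matrix (Fin n) (Fin n) ℝ)
    (hHp : Hp = Matrix.of fun i j => (if i = j then (1 : ℝ) else 0) - p j)
    (hHq : Hq = Matrix.of fun i j => (if i = j then (1 : ℝ) else 0) - q j)
    (Bp Bq : Matrix (Fin n) (Fin n) ℝ)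
    (hBp : Bp = (-(1 / 2) : ℝ) • (Hp * D * Hpᵀ))
    (hBq : Bq = (-(1 / 2) : ℝ) • (Hq * D * Hqᵀ)) :
    Bp.PosSemidef ↔ Bq.PosSemidef :=
  euclidean_character_weight_independent_general D p q hps hqs Hp Hq hHp hHq Bp Bq hBp hBq
end

section
/- Let $E$ be an exchange matrix with weights $f_i > 0$. Two distinct vertices $i, j$ satisfy $e_{ik}/f_i = e_{jk}/f_j$ for all $k$ if and only if $u_{i\alpha}/\sqrt{f_i} = u_{j\alpha}/\sqrt{f_j}$ for every eigenvector $u_\alpha$ of the normalized exchange matrix $\Pi^{-1/2} E \Pi^{-1/2}$ whose eigenvalue $\lambda_\alpha$ is nonzero. -/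
/-!
Put `w = eᵢ / √fᵢ - eⱼ / √fⱼ`. Then `u ⬝ᵥ w` is the difference of the raw coordinates of `i`
and `j`, while `(S w)ₖ = (eᵢₖ / fᵢ - eⱼₖ / fⱼ) / √fₖ` by symmetry of `E`; so `i` and `j` are
equivalent iff `S w = 0`. For a symmetric matrix the kernel is the orthogonal complement of the
eigenvectors with nonzero eigenvalue, as the expansion of `S w` in an orthonormal eigenbasis shows.
-/

open Matrix

namespace Matrix.IsHermitian

variable {𝕜 n : Type*} [RCLike 𝕜] [Fintype n] [DecidableEq n] {A : Matrix n n 𝕜}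

theorem mulVec_eq_zero_iff_forall_eigenvector (hA : A.IsHermitian) (w : n → 𝕜) :
    A *ᵥ w = 0 ↔ ∀ (μ : 𝕜) (v : n → 𝕜), μ ≠ 0 → A *ᵥ v = μ • v → star v ⬝ᵥ w = 0 := by
  constructor
  · intro hw μ v hμ hv
    have : star μ * (star v ⬝ᵥ w) = 0 := by
      rw [← smul_eq_mul, ← smul_dotProduct, ← star_smul, ← hv, star_mulVec, hA.eq,
        ← dotProduct_mulVec, hw, dotProduct_zero]
    simpa [hμ] using this
  · intro h
    set B := hA.eigenvectorBasis
    have hterm : ∀ α, inner 𝕜 (B α) (WithLp.toLp 2 w) • hA.eigenvalues α • ⇑(B α) = 0 := by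
      intro α
      by_cases hzero : hA.eigenvalues α = 0
      · rw [hzero, zero_smul, smul_zero]
      · have hev := hA.mulVec_eigenvectorBasis α
        rw [RCLike.real_smul_eq_coe_smul (K := 𝕜)] at hev
        rw [EuclideanSpace.inner_toLp_toLp, dotProduct_comm,
          h _ _ (RCLike.ofReal_ne_zero.mpr hzero) hev, zero_smul]
    calc A *ᵥ w = A *ᵥ ⇑(∑ α, inner 𝕜 (B α) (WithLp.toLp 2 w) • B α) := by
          rw [B.sum_repr']
      _ = ∑ α, inner 𝕜 (B α) (WithLp.toLp 2 w) • hA.eigenvalues α • ⇑(B α) := by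
          simp only [WithLp.ofLp_sum, WithLp.ofLp_smul, mulVec_sum, mulVec_smul, B,
            hA.mulVec_eigenvectorBasis]
      _ = 0 := Finset.sum_eq_zero fun α _ => hterm α

end Matrix.IsHermitian

variable {ι : Type*}

noncomputable def normalizedExchange (E : Matrix ι ι ℝ) (f : ι → ℝ) : Matrix ι ι ℝ :=
  of fun i j => E i j / (Real.sqrt (f i) * Real.sqrt (f j))

noncomputable def rawDifference [DecidableEq ι] (f : ι → ℝ) (i j : ι) : ι → ℝ :=
  Pi.single i (Real.sqrt (f i))⁻¹ - Pi.single j (Real.sqrt (f j))⁻¹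

variable {E : Matrix ι ι ℝ} {f : ι → ℝ}

theorem isHermitian_normalizedExchange (hE : E.IsSymm) : (normalizedExchange E f).IsHermitian := by
  rw [isHermitian_iff_isSymm]
  ext i j
  simp [normalizedExchange, hE.apply i j, mul_comm]

variable [Fintype ι] [DecidableEq ι]

theorem dotProduct_rawDifference (v : ι → ℝ) (i j : ι) :
    v ⬝ᵥ rawDifference f i j = v i / Real.sqrt (f i) - v j / Real.sqrt (f j) := by
  simp [rawDifference, dotProduct_sub, dotProduct_single, div_eq_mul_inv]

theorem normalizedExchange_mulVec_rawDifference_apply (hE : E.IsSymm) {i j : ι}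
    (hi : 0 ≤ f i) (hj : 0 ≤ f j) (k : ι) :
    (normalizedExchange E f *ᵥ rawDifference f i j) k =
      (E i k / f i - E j k / f j) / Real.sqrt (f k) := by
  have term : ∀ l, 0 ≤ f l →
      E k l / (Real.sqrt (f k) * Real.sqrt (f l)) * (Real.sqrt (f l))⁻¹ =
        E l k / f l / Real.sqrt (f k) := by
    intro l hl
    conv_rhs => rw [← Real.mul_self_sqrt hl]
    rw [hE.apply l k]
    ring
  simp only [mulVec, normalizedExchange, of_apply, rawDifference, dotProduct_sub,
    dotProduct_single]
  rw [term i hi, term j hj, sub_div]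

theorem normalizedExchange_mulVec_rawDifference_eq_zero_iff (hE : E.IsSymm)
    (hf : ∀ k, 0 < f k) {i j : ι} :
    normalizedExchange E f *ᵥ rawDifference f i j = 0 ↔ ∀ k, E i k / f i = E j k / f j := by
  simp only [funext_iff, normalizedExchange_mulVec_rawDifference_apply hE (hf i).le (hf j).le,
    Pi.zero_apply, div_eq_zero_iff, sub_eq_zero, (Real.sqrt_pos.mpr (hf _)).ne', or_false]

theorem equivalent_iff_raw_coordinates_general {n : ℕ}
    (E : Matrix (Fin n) (Fin n) ℝ) (hsym : E.IsSymm)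
    (f : Fin n → ℝ) (hfpos : ∀ i, 0 < f i)
    (S : Matrix (Fin n) (Fin n) ℝ)
    (hS : S = Matrix.of fun i j => E i j / (Real.sqrt (f i) * Real.sqrt (f j)))
    (i j : Fin n) :
    (∀ k, E i k / f i = E j k / f j) ↔
    (∀ (μ : ℝ) (u : Fin n → ℝ), μ ≠ 0 → S.mulVec u = μ • u →
      u i / Real.sqrt (f i) = u j / Real.sqrt (f j)) := by
  obtain rfl : S = normalizedExchange E f := hS
  rw [← normalizedExchange_mulVec_rawDifference_eq_zero_iff hsym hfpos,
    (isHermitian_normalizedExchange hsym).mulVec_eq_zero_iff_forall_eigenvector]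
  simp only [star_trivial, dotProduct_rawDifference, sub_eq_zero]

/-- Two distinct vertices are equivalent iff their raw coordinates coincide in
every eigendimension of the normalized exchange matrix with nonzero eigenvalue. -/
theorem equivalent_iff_raw_coordinates {n : ℕ}
    (E : Matrix (Fin n) (Fin n) ℝ) (hsym : E.IsSymm)
    (hnn : ∀ i j, 0 ≤ E i j) (hsum : ∑ i, ∑ j, E i j = 1)
    (f : Fin n → ℝ) (hf : ∀ i, f i = ∑ j, E i j) (hfpos : ∀ i, 0 < f i)
    (S : Matrix (Fin n) (Fin n) ℝ)
    (hS : S = Matrix.of fun i j => E i j / (Real.sqrt (f i) * Real.sqrt (f j)))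
    (i j : Fin n) (hij : i ≠ j) :
    (∀ k, E i k / f i = E j k / f j) ↔
    (∀ (μ : ℝ) (u : Fin n → ℝ), μ ≠ 0 → S.mulVec u = μ • u →
      u i / Real.sqrt (f i) = u j / Real.sqrt (f j)) :=
  equivalent_iff_raw_coordinates_general E hsym f hfpos S hS i j
end

section
/- Let $g: [-1,1] \to [0,\infty)$ with $g(0) = 0$, and let $E$ be an exchange matrix. Define $K = g(E^s)$ via the spectral calculus on the standardized exchange matrix $E^s$, $B = \Pi^{-1/2} K \Pi^{-1/2}$, and $D_{ij} = B_{ii} + B_{jj} - 2B_{ij}$. Then $D$ is a squared Euclidean distance (i.e. there exist points $y_1,\dots,y_n$ in some Euclidean space with $D_{ij} = \|y_i - y_j\|^2$), and $D_{ij} = 0$ whenever vertices $i$ and $j$ are equivalent ($e_{ik}/f_i = e_{jk}/f_j$ for all $k$). -/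
/-!
Write `K = ∑ α g(λ_α) u_α u_αᵀ` with `g(λ_α) ≥ 0`. Then `B = Π^{-1/2} K Π^{-1/2}` is the Gram matrix
of the points `y_i = (√g(λ_α) u_α(i) / √f_i)_α`, so `D_ij = ‖y_i - y_j‖²`. Since the `u_α` are
orthonormal, `E^s u_α = λ_α u_α`; the `i`-th row of `Π^{-1/2} E^s` is `(e_ik / f_i - f_k) / √f_k`,
so it is the same at equivalent vertices, and hence `λ_α u_α(i) / √f_i = λ_α u_α(j) / √f_j`.
Coordinates with `λ_α = 0` vanish because `g(0) = 0`, so `y_i = y_j`.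
-/

open Matrix

namespace Matrix

variable {ι κ R : Type*} [Fintype κ]

theorem sum_smul_vecMulVec_apply [CommSemiring R] (c : κ → R) (u : κ → ι → R) (a b : ι) :
    (∑ α, c α • vecMulVec (u α) (u α)) a b = ∑ α, c α * (u α a * u α b) := by
  simp [sum_apply, vecMulVec_apply]

theorem sum_smul_vecMulVec_mulVec_of_orthonormal [Fintype ι] [CommSemiring R] [DecidableEq κ]
    {u : κ → ι → R} (horth : ∀ α β, ∑ k, u α k * u β k = if α = β then 1 else 0)
    (c : κ → R) (β : κ) :
    (∑ α, c α • vecMulVec (u α) (u α)) *ᵥ u β = c β • u β := by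
  ext a
  simp only [mulVec, dotProduct, sum_smul_vecMulVec_apply, Finset.sum_mul]
  rw [Finset.sum_comm]
  simp_rw [mul_assoc, ← Finset.mul_sum, horth]
  simp

theorem diagonal_mul_sum_smul_vecMulVec_mul_diagonal [Fintype ι] [DecidableEq ι] [CommSemiring R]
    (d : ι → R) (c : κ → R) (u : κ → ι → R) :
    diagonal d * (∑ α, c α • vecMulVec (u α) (u α)) * diagonal d =
      ∑ α, c α • vecMulVec (d * u α) (d * u α) := by
  ext a b
  simp only [mul_diagonal, diagonal_mul, sum_smul_vecMulVec_apply, Pi.mul_apply]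
  rw [Finset.mul_sum, Finset.sum_mul]
  exact Finset.sum_congr rfl fun α _ => by ring

noncomputable def gramPoint (c : κ → ℝ) (v : κ → ι → ℝ) (i : ι) : EuclideanSpace ℝ κ :=
  WithLp.toLp 2 fun α => √(c α) * v α i

theorem sum_smul_vecMulVec_apply_eq_inner {c : κ → ℝ} (hc : ∀ α, 0 ≤ c α) (v : κ → ι → ℝ)
    (i j : ι) :
    (∑ α, c α • vecMulVec (v α) (v α)) i j = inner ℝ (gramPoint c v i) (gramPoint c v j) := by
  simp only [sum_smul_vecMulVec_apply, gramPoint, PiLp.inner_apply, RCLike.inner_apply,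
    conj_trivial]
  refine Finset.sum_congr rfl fun α _ => ?_
  linear_combination -(v α i * v α j) * Real.mul_self_sqrt (hc α)

end Matrix

theorem div_sqrt_mul_div_sqrt {e a b : ℝ} (ha : 0 < a) (hb : 0 < b) :
    (e - a * b) / √(a * b) / √a = (e / a - b) / √b := by
  have := Real.mul_self_sqrt ha.le
  rw [Real.sqrt_mul ha.le]
  field_simp
  linear_combination (a * b - e) * this

theorem focused_distance_euclidean_general {n : ℕ}
    (E : Matrix (Fin n) (Fin n) ℝ)
    (f : Fin n → ℝ) (hfpos : ∀ i, 0 < f i)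
    (Es : Matrix (Fin n) (Fin n) ℝ)
    (hEs : ∀ i j, Es i j = (E i j - f i * f j) / Real.sqrt (f i * f j))
    -- spectral decomposition of `E^s`:
    (lam : Fin n → ℝ) (u : Fin n → Fin n → ℝ)
    (horth : ∀ α β, ∑ k, u α k * u β k = if α = β then (1 : ℝ) else 0)
    (hdecomp : Es = ∑ α, lam α • Matrix.vecMulVec (u α) (u α))
    (hspec : ∀ α, -1 ≤ lam α ∧ lam α ≤ 1)
    -- the function `g`:
    (g : ℝ → ℝ) (hg0 : g 0 = 0) (hgnn : ∀ x, -1 ≤ x → x ≤ 1 → 0 ≤ g x)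
    (K : Matrix (Fin n) (Fin n) ℝ)
    (hK : K = ∑ α, g (lam α) • Matrix.vecMulVec (u α) (u α))
    (B : Matrix (Fin n) (Fin n) ℝ)
    (hB : B = Matrix.diagonal (fun i => (Real.sqrt (f i))⁻¹) * K *
      Matrix.diagonal (fun i => (Real.sqrt (f i))⁻¹))
    (D : Fin n → Fin n → ℝ)
    (hD : ∀ i j, D i j = B i i + B j j - 2 * B i j) :
    (∃ (q : ℕ) (y : Fin n → EuclideanSpace ℝ (Fin q)),
      ∀ i j, D i j = ‖y i - y j‖ ^ 2) ∧
    (∀ i j, i ≠ j → (∀ k, E i k / f i = E j k / f j) → D i j = 0) := by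
  set d : Fin n → ℝ := fun i => (√(f i))⁻¹
  have hg : ∀ α, 0 ≤ g (lam α) := fun α => hgnn _ (hspec α).1 (hspec α).2
  set y := gramPoint (fun α => g (lam α)) (fun α => d * u α)
  have hBy : ∀ i j, B i j = inner ℝ (y i) (y j) := by
    rw [hB, hK, diagonal_mul_sum_smul_vecMulVec_mul_diagonal]
    exact sum_smul_vecMulVec_apply_eq_inner hg _
  have hDy : ∀ i j, D i j = ‖y i - y j‖ ^ 2 := fun i j => by
    rw [hD, hBy, hBy, hBy, norm_sub_sq_real, real_inner_self_eq_norm_sq,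
      real_inner_self_eq_norm_sq]
    ring
  refine ⟨⟨n, y, hDy⟩, fun i j _ hij => ?_⟩
  have hrow : ∀ k, d i * Es i k = d j * Es j k := fun k => by
    simp only [d, hEs, inv_mul_eq_div, div_sqrt_mul_div_sqrt (hfpos _) (hfpos k), hij k]
  have hcoord : ∀ α, lam α ≠ 0 → d i * u α i = d j * u α j := by
    intro α hα
    have heig : Es *ᵥ u α = lam α • u α :=
      hdecomp ▸ sum_smul_vecMulVec_mulVec_of_orthonormal horth lam α
    refine mul_left_cancel₀ hα ?_
    calc lam α * (d i * u α i) = d i * (Es *ᵥ u α) i := by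
          simp only [heig, Pi.smul_apply, smul_eq_mul]; ring
      _ = d j * (Es *ᵥ u α) j := by
          simp only [mulVec, dotProduct, Finset.mul_sum, ← mul_assoc, hrow]
      _ = lam α * (d j * u α j) := by
          simp only [heig, Pi.smul_apply, smul_eq_mul]; ring
  have hyij : y i = y j := by
    ext α
    by_cases hα : lam α = 0
    · simp [y, gramPoint, hα, hg0]
    · simp [y, gramPoint, hcoord α hα]
  rw [hDy, hyij, sub_self, norm_zero, sq, mul_zero]

/-- Focused squared Euclidean distances on weighted graphs: for nonnegative `g`
with `g(0) = 0`, the distance built from `K = g(E^s)` (spectral calculus) is a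
squared Euclidean distance, vanishing between equivalent vertices. -/
theorem focused_distance_euclidean {n : ℕ}
    (E : Matrix (Fin n) (Fin n) ℝ) (hsym : E.IsSymm)
    (hnn : ∀ i j, 0 ≤ E i j) (hsum : ∑ i, ∑ j, E i j = 1)
    (f : Fin n → ℝ) (hf : ∀ i, f i = ∑ j, E i j) (hfpos : ∀ i, 0 < f i)
    (Es : Matrix (Fin n) (Fin n) ℝ)
    (hEs : ∀ i j, Es i j = (E i j - f i * f j) / Real.sqrt (f i * f j))
    -- spectral decomposition of `E^s`:
    (lam : Fin n → ℝ) (u : Fin n → Fin n → ℝ)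
    (horth : ∀ α β, ∑ k, u α k * u β k = if α = β then (1 : ℝ) else 0)
    (hdecomp : Es = ∑ α, lam α • Matrix.vecMulVec (u α) (u α))
    (hspec : ∀ α, -1 ≤ lam α ∧ lam α ≤ 1)
    -- the function `g`:
    (g : ℝ → ℝ) (hg0 : g 0 = 0) (hgnn : ∀ x, -1 ≤ x → x ≤ 1 → 0 ≤ g x)
    (K : Matrix (Fin n) (Fin n) ℝ)
    (hK : K = ∑ α, g (lam α) • Matrix.vecMulVec (u α) (u α))
    (B : Matrix (Fin n) (Fin n) ℝ)
    (hB : B = Matrix.diagonal (fun i => (Real.sqrt (f i))⁻¹) * K *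
      Matrix.diagonal (fun i => (Real.sqrt (f i))⁻¹))
    (D : Fin n → Fin n → ℝ)
    (hD : ∀ i j, D i j = B i i + B j j - 2 * B i j) :
    (∃ (q : ℕ) (y : Fin n → EuclideanSpace ℝ (Fin q)),
      ∀ i j, D i j = ‖y i - y j‖ ^ 2) ∧
    (∀ i j, i ≠ j → (∀ k, E i k / f i = E j k / f j) → D i j = 0) :=
  focused_distance_euclidean_general E f hfpos Es hEs lam u horth hdecomp hspec g hg0 hgnn K hK B hB
    D hD
end

section
/- Let $E$ be an exchange matrix and let $D^{\chi}_{ij} = \sum_k f_k^{-1} (e_{ik}/f_i - e_{jk}/f_j)^2$ be the chi-square distance. Then $D^{\chi}$ coincides with the distance obtained from Definition of natural distances with $g(\lambda) = \lambda^2$, i.e. $D^\chi_{ij} = B_{ii} + B_{jj} - 2B_{ij}$ where $B = \Pi^{-1/2} (E^s)^2 \Pi^{-1/2}$, and $D^\chi_{ij} = 0$ for equivalent vertices $i \sim j$. -/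
/-!
Writing `Es = Π^{-1/2} (E - f fᵀ) Π^{-1/2}` and using the symmetry of `E`, the Gram matrix `B` has
entries `B i j = ∑ k, f_k⁻¹ (e_ik/f_i - f_k)(e_jk/f_j - f_k)`: the `f_k⁻¹`-weighted inner product of
the centred profiles of `i` and `j`. The chi-square distance is the weighted squared distance of the
uncentred profiles, and centring both by the same vector does not change their difference.
-/

open BigOperators Matrix Finset

theorem sum_mul_sub_sq_eq_centered {ι : Type*} [Fintype ι] (w x y c : ι → ℝ) :
    ∑ k, w k * (x k - y k) ^ 2 =
      ∑ k, w k * ((x k - c k) * (x k - c k)) + ∑ k, w k * ((y k - c k) * (y k - c k)) -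
        2 * ∑ k, w k * ((x k - c k) * (y k - c k)) := by
  rw [mul_sum, ← sum_add_distrib, ← sum_sub_distrib]
  exact sum_congr rfl fun k _ => by ring

theorem inv_sqrt_mul_standardized_mul_mul_inv_sqrt {a b p q r : ℝ}
    (hp : 0 < p) (hq : 0 < q) (hr : 0 < r) :
    (√p)⁻¹ * ((a - p * r) / √(p * r) * ((b - r * q) / √(r * q))) * (√q)⁻¹ =
      r⁻¹ * ((a / p - r) * (b / q - r)) := by
  rw [Real.sqrt_mul hp.le, Real.sqrt_mul hr.le]
  have hp' : √p ^ 2 = p := Real.sq_sqrt hp.le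
  have hq' : √q ^ 2 = q := Real.sq_sqrt hq.le
  have hr' : √r ^ 2 = r := Real.sq_sqrt hr.le
  have hp₀ : 0 < √p := Real.sqrt_pos.mpr hp
  have hq₀ : 0 < √q := Real.sqrt_pos.mpr hq
  have hr₀ : 0 < √r := Real.sqrt_pos.mpr hr
  field_simp
  rw [hp', hq', hr']
  ring

theorem diagonal_inv_sqrt_mul_sq_mul_diagonal_inv_sqrt_apply {ι : Type*} [Fintype ι]
    [DecidableEq ι] {E Es : Matrix ι ι ℝ} (hsym : E.IsSymm) {f : ι → ℝ} (hfpos : ∀ i, 0 < f i)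
    (hEs : ∀ i j, Es i j = (E i j - f i * f j) / √(f i * f j)) (i j : ι) :
    (diagonal (fun i => (√(f i))⁻¹) * Es ^ 2 * diagonal (fun i => (√(f i))⁻¹)) i j =
      ∑ k, (f k)⁻¹ * ((E i k / f i - f k) * (E j k / f j - f k)) := by
  rw [pow_two, mul_diagonal, diagonal_mul, mul_apply, mul_sum, sum_mul]
  refine sum_congr rfl fun k _ => ?_
  rw [hEs, hEs, hsym.apply j k]
  exact inv_sqrt_mul_standardized_mul_mul_inv_sqrt (hfpos i) (hfpos j) (hfpos k)

theorem chi_square_distance_general {n : ℕ}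
    (E : Matrix (Fin n) (Fin n) ℝ) (hsym : E.IsSymm)
    (f : Fin n → ℝ) (hfpos : ∀ i, 0 < f i)
    (Es : Matrix (Fin n) (Fin n) ℝ)
    (hEs : ∀ i j, Es i j = (E i j - f i * f j) / Real.sqrt (f i * f j))
    (B : Matrix (Fin n) (Fin n) ℝ)
    (hB : B = Matrix.diagonal (fun i => (Real.sqrt (f i))⁻¹) * Es ^ 2 *
      Matrix.diagonal (fun i => (Real.sqrt (f i))⁻¹))
    (Dchi : Fin n → Fin n → ℝ)
    (hDchi : ∀ i j, Dchi i j = ∑ k, (f k)⁻¹ * (E i k / f i - E j k / f j) ^ 2) :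
    (∀ i j, Dchi i j = B i i + B j j - 2 * B i j) ∧
    (∀ i j, i ≠ j → (∀ k, E i k / f i = E j k / f j) → Dchi i j = 0) := by
  have hB_apply (i j : Fin n) :
      B i j = ∑ k, (f k)⁻¹ * ((E i k / f i - f k) * (E j k / f j - f k)) :=
    hB ▸ diagonal_inv_sqrt_mul_sq_mul_diagonal_inv_sqrt_apply hsym hfpos hEs i j
  refine ⟨fun i j => ?_, fun i j _ hequiv => ?_⟩
  · rw [hDchi, hB_apply, hB_apply, hB_apply]
    exact sum_mul_sub_sq_eq_centered (fun k => (f k)⁻¹) (fun k => E i k / f i)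
      (fun k => E j k / f j) f
  · rw [hDchi]
    exact sum_eq_zero fun k _ => by rw [hequiv k, sub_self, zero_pow two_ne_zero, mul_zero]

/-- The chi-square distance coincides with the natural distance associated with
`g(λ) = λ²`, and vanishes between equivalent vertices. -/
theorem chi_square_distance {n : ℕ}
    (E : Matrix (Fin n) (Fin n) ℝ) (hsym : E.IsSymm)
    (hnn : ∀ i j, 0 ≤ E i j) (hsum : ∑ i, ∑ j, E i j = 1)
    (f : Fin n → ℝ) (hf : ∀ i, f i = ∑ j, E i j) (hfpos : ∀ i, 0 < f i)
    (Es : Matrix (Fin n) (Fin n) ℝ)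
    (hEs : ∀ i j, Es i j = (E i j - f i * f j) / Real.sqrt (f i * f j))
    (B : Matrix (Fin n) (Fin n) ℝ)
    (hB : B = Matrix.diagonal (fun i => (Real.sqrt (f i))⁻¹) * Es ^ 2 *
      Matrix.diagonal (fun i => (Real.sqrt (f i))⁻¹))
    (Dchi : Fin n → Fin n → ℝ)
    (hDchi : ∀ i j, Dchi i j = ∑ k, (f k)⁻¹ * (E i k / f i - E j k / f j) ^ 2) :
    (∀ i j, Dchi i j = B i i + B j j - 2 * B i j) ∧
    (∀ i j, i ≠ j → (∀ k, E i k / f i = E j k / f j) → Dchi i j = 0) :=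
  chi_square_distance_general E hsym f hfpos Es hEs B hB Dchi hDchi
end

section
/- Let $E$ be an exchange matrix whose associated normalized matrix $\Pi^{-1/2}E\Pi^{-1/2}$ is positive semi-definite. Then the diffusive distance $D^{\mathit{dif}}_{ij} = e_{ii}/f_i^2 + e_{jj}/f_j^2 - 2 e_{ij}/(f_i f_j)$ is a squared Euclidean distance, and its inertia with respect to weights $f$ equals $\frac12 \sum_{ij} f_i f_j D^{\mathit{dif}}_{ij} = \sum_i e_{ii}/f_i - 1$. -/
open BigOperators Matrix

/-!
Conjugating `S = Π^{-1/2} E Π^{-1/2}` once more by `Π^{-1/2}` gives the positive semi-definite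
kernel `K i j = e_{ij} / (f_i f_j)`, and `D^dif i j = K i i + K j j - 2 K i j`. A positive
semi-definite matrix is a Gram matrix, so `D^dif` is the squared distance between Gram vectors.
For the inertia, expanding with weights `f` of total mass one leaves
`∑ f_i K i i - ∑ f_i f_j K i j = ∑ e_{ii} / f_i - ∑ e_{ij}`.
-/

theorem Matrix.PosSemidef.exists_eq_gram {ι : Type*} [Fintype ι] {M : Matrix ι ι ℝ}
    (hM : M.PosSemidef) : ∃ y : ι → EuclideanSpace ℝ ι, M = gram ℝ y := by
  classical
  open scoped MatrixOrder in
  obtain ⟨B, rfl⟩ := CStarAlgebra.nonneg_iff_eq_star_mul_self.mp hM.nonneg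
  refine ⟨fun i => WithLp.toLp 2 (fun k => B k i), Matrix.ext fun i j => ?_⟩
  simp [gram_apply, Matrix.mul_apply, PiLp.inner_apply, mul_comm]

theorem Matrix.PosSemidef.exists_norm_sub_sq_eq {ι : Type*} [Fintype ι] {M : Matrix ι ι ℝ}
    (hM : M.PosSemidef) :
    ∃ y : ι → EuclideanSpace ℝ ι, ∀ i j, M i i + M j j - 2 * M i j = ‖y i - y j‖ ^ 2 := by
  obtain ⟨y, rfl⟩ := hM.exists_eq_gram
  refine ⟨y, fun i j => ?_⟩
  simp only [gram_apply, real_inner_self_eq_norm_sq, norm_sub_sq_real]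
  ring

theorem Matrix.PosSemidef.of_mul_mul {ι : Type*} [Fintype ι] {S : Matrix ι ι ℝ}
    (hS : S.PosSemidef) (d : ι → ℝ) : (of fun i j => d i * S i j * d j).PosSemidef := by
  classical
  convert hS.mul_mul_conjTranspose_same (diagonal d) using 1
  ext i j
  simp [mul_diagonal, diagonal_mul]

theorem div_mul_eq_inv_sqrt_mul_div_mul_inv_sqrt (e : ℝ) {a b : ℝ} (ha : 0 < a) (hb : 0 < b) :
    e / (a * b) = (√a)⁻¹ * (e / (√a * √b)) * (√b)⁻¹ := by
  have := (Real.sqrt_pos.2 ha).ne'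
  have := (Real.sqrt_pos.2 hb).ne'
  field_simp
  rw [Real.sq_sqrt ha.le, Real.sq_sqrt hb.le]

theorem inertia_eq_sum_diag_sub_sum {ι : Type*} [Fintype ι] (w : ι → ℝ) (hw : ∑ i, w i = 1)
    (K : Matrix ι ι ℝ) :
    (1 / 2) * ∑ i, ∑ j, w i * w j * (K i i + K j j - 2 * K i j)
      = ∑ i, w i * K i i - ∑ i, ∑ j, w i * w j * K i j := by
  have hdiag : ∑ i, ∑ j, w i * w j * K i i = ∑ i, w i * K i i :=
    Finset.sum_congr rfl fun i _ => by rw [← Finset.sum_mul, ← Finset.mul_sum, hw, mul_one]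
  have hdiag' : ∑ i, ∑ j, w i * w j * K j j = ∑ i, w i * K i i := by
    rw [Finset.sum_comm, ← hdiag]
    exact Finset.sum_congr rfl fun i _ => Finset.sum_congr rfl fun j _ => by ring
  simp only [mul_sub, mul_add, Finset.sum_sub_distrib, Finset.sum_add_distrib, hdiag, hdiag']
  simp_rw [mul_left_comm _ (2 : ℝ), ← Finset.mul_sum]
  ring

theorem diffusive_distance_general {n : ℕ}
    (E : Matrix (Fin n) (Fin n) ℝ)
    (hsum : ∑ i, ∑ j, E i j = 1)
    (f : Fin n → ℝ) (hf : ∀ i, f i = ∑ j, E i j) (hfpos : ∀ i, 0 < f i)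
    (S : Matrix (Fin n) (Fin n) ℝ)
    (hS : S = Matrix.of fun i j => E i j / (Real.sqrt (f i) * Real.sqrt (f j)))
    (hpsd : S.PosSemidef)
    (D : Fin n → Fin n → ℝ)
    (hD : ∀ i j, D i j = E i i / (f i) ^ 2 + E j j / (f j) ^ 2
      - 2 * (E i j / (f i * f j))) :
    (∃ (q : ℕ) (y : Fin n → EuclideanSpace ℝ (Fin q)),
      ∀ i j, D i j = ‖y i - y j‖ ^ 2) ∧
    (1 / 2) * ∑ i, ∑ j, f i * f j * D i j = (∑ i, E i i / f i) - 1 := by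
  set K : Matrix (Fin n) (Fin n) ℝ := of fun i j => E i j / (f i * f j)
  have hK : K = of fun i j => (√(f i))⁻¹ * S i j * (√(f j))⁻¹ := by
    ext i j
    simpa only [K, hS, of_apply] using
      div_mul_eq_inv_sqrt_mul_div_mul_inv_sqrt (E i j) (hfpos i) (hfpos j)
  have hDK : ∀ i j, D i j = K i i + K j j - 2 * K i j := fun i j => by
    rw [hD]; simp only [K, of_apply, sq]
  refine ⟨?_, ?_⟩
  · obtain ⟨y, hy⟩ := (hK ▸ hpsd.of_mul_mul fun i => (√(f i))⁻¹).exists_norm_sub_sq_eq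
    exact ⟨n, y, fun i j => by rw [hDK, hy]⟩
  · have hfsum : ∑ i, f i = 1 := by simp_rw [hf, hsum]
    have hdiag : ∀ i, f i * K i i = E i i / f i := fun i => by
      have := (hfpos i).ne'; simp only [K, of_apply]; field_simp
    have hoff : ∀ i j, f i * f j * K i j = E i j := fun i j => by
      have := (hfpos i).ne'; have := (hfpos j).ne'; simp only [K, of_apply]; field_simp
    simp_rw [hDK, inertia_eq_sum_diag_sub_sum f hfsum K, hdiag, hoff, hsum]

/-- For a positive semi-definite (diffusive) exchange matrix, the diffusive
distance is a squared Euclidean distance with inertia `∑_i e_{ii}/f_i - 1`. -/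
theorem diffusive_distance {n : ℕ}
    (E : Matrix (Fin n) (Fin n) ℝ) (hsym : E.IsSymm)
    (hnn : ∀ i j, 0 ≤ E i j) (hsum : ∑ i, ∑ j, E i j = 1)
    (f : Fin n → ℝ) (hf : ∀ i, f i = ∑ j, E i j) (hfpos : ∀ i, 0 < f i)
    (S : Matrix (Fin n) (Fin n) ℝ)
    (hS : S = Matrix.of fun i j => E i j / (Real.sqrt (f i) * Real.sqrt (f j)))
    (hpsd : S.PosSemidef)
    (D : Fin n → Fin n → ℝ)
    (hD : ∀ i j, D i j = E i i / (f i) ^ 2 + E j j / (f j) ^ 2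
      - 2 * (E i j / (f i * f j))) :
    (∃ (q : ℕ) (y : Fin n → EuclideanSpace ℝ (Fin q)),
      ∀ i j, D i j = ‖y i - y j‖ ^ 2) ∧
    (1 / 2) * ∑ i, ∑ j, f i * f j * D i j = (∑ i, E i i / f i) - 1 :=
  diffusive_distance_general E hsum f hf hfpos S hS hpsd D hD
end

section
/- Let $E$ be a regular (irreducible aperiodic) exchange matrix with transition matrix $P = \Pi^{-1}E$, mean hitting times $m_{ij} = E_i(T_j)$, and fundamental matrix $Y = (E^{(0)} - E + ff')^{-1}\Pi$. Then the distance obtained from $g(\lambda) = (1-\lambda)^{-1}$ satisfies $D^{\mathit{com}}_{ij} = m_{ij} + m_{ji}$, the average commute time between $i$ and $j$. -/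
open BigOperators Matrix

/-- The natural distance associated with `g(λ) = (1-λ)⁻¹` is the average
commute time distance: `D^com_{ij} = m_{ij} + m_{ji}`. -/
theorem commute_time_distance {n : ℕ}
    (E : Matrix (Fin n) (Fin n) ℝ) (hsym : E.IsSymm)
    (hnn : ∀ i j, 0 ≤ E i j) (hsum : ∑ i, ∑ j, E i j = 1)
    (f : Fin n → ℝ) (hf : ∀ i, f i = ∑ j, E i j) (hfpos : ∀ i, 0 < f i)
    (Es : Matrix (Fin n) (Fin n) ℝ)
    (hEs : ∀ i j, Es i j = (E i j - f i * f j) / Real.sqrt (f i * f j))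
    -- connectedness/regularity: `I - E^s` is invertible
    (hreg : IsUnit (1 - Es))
    -- mean hitting times `m_{ij} = E_i(T_j)` characterized by the first-step recursion
    (m : Fin n → Fin n → ℝ)
    (hm0 : ∀ i, m i i = 0)
    (hmrec : ∀ i j, i ≠ j → m i j = 1 + ∑ k, (E i k / f i) * m k j)
    (B : Matrix (Fin n) (Fin n) ℝ)
    (hB : B = Matrix.diagonal (fun i => (Real.sqrt (f i))⁻¹) * (1 - Es)⁻¹ *
      Matrix.diagonal (fun i => (Real.sqrt (f i))⁻¹))
    (Dcom : Fin n → Fin n → ℝ)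
    (hDcom : ∀ i j, Dcom i j = B i i + B j j - 2 * B i j) :
    ∀ i j, Dcom i j = m i j + m j i := by
  -- basic facts about f
  have hfne : ∀ i, f i ≠ 0 := fun i => ne_of_gt (hfpos i)
  have hfs : ∀ i, Real.sqrt (f i) ≠ 0 := fun i =>
    ne_of_gt (Real.sqrt_pos.2 (hfpos i))
  have hsumf : ∑ k, f k = 1 := by
    calc ∑ k, f k = ∑ k, ∑ j, E k j := Finset.sum_congr rfl (fun k _ => hf k)
      _ = 1 := hsum
  -- column sums of E
  have hcolE : ∀ j, ∑ i, E i j = f j := by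
    intro j
    calc ∑ i, E i j = ∑ i, E j i :=
          Finset.sum_congr rfl (fun i _ => hsym.apply j i)
      _ = f j := (hf j).symm
  -- the matrices
  set S : Matrix (Fin n) (Fin n) ℝ := Matrix.diagonal (fun i => Real.sqrt (f i)) with hS
  set Si : Matrix (Fin n) (Fin n) ℝ := Matrix.diagonal (fun i => (Real.sqrt (f i))⁻¹) with hSi
  have hSSi : S * Si = 1 := by
    rw [hS, hSi, Matrix.diagonal_mul_diagonal]
    rw [show (fun i => Real.sqrt (f i) * (Real.sqrt (f i))⁻¹) = fun _ => (1:ℝ) from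
      funext fun i => mul_inv_cancel₀ (hfs i), Matrix.diagonal_one]
  have hSiS : Si * S = 1 := by
    rw [hS, hSi, Matrix.diagonal_mul_diagonal]
    rw [show (fun i => (Real.sqrt (f i))⁻¹ * Real.sqrt (f i)) = fun _ => (1:ℝ) from
      funext fun i => inv_mul_cancel₀ (hfs i), Matrix.diagonal_one]
  set A : Matrix (Fin n) (Fin n) ℝ :=
    Matrix.diagonal f - E + Matrix.vecMulVec f f with hA
  -- A = S (1 - Es) S
  have hAfact : A = S * (1 - Es) * S := by
    ext i j
    have h1 : (S * (1 - Es) * S) i j = Real.sqrt (f i) * (1 - Es) i j * Real.sqrt (f j) := by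
      rw [hS, Matrix.mul_diagonal, Matrix.diagonal_mul]
    have hsqrt : Real.sqrt (f i) * Real.sqrt (f j) = Real.sqrt (f i * f j) :=
      (Real.sqrt_mul (le_of_lt (hfpos i)) (f j)).symm
    have hsqrtne : Real.sqrt (f i * f j) ≠ 0 :=
      ne_of_gt (Real.sqrt_pos.2 (mul_pos (hfpos i) (hfpos j)))
    have key : Real.sqrt (f i) * Es i j * Real.sqrt (f j) = E i j - f i * f j := by
      rw [hEs i j, mul_comm (Real.sqrt (f i)) _, mul_assoc, hsqrt, div_mul_cancel₀ _ hsqrtne]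
    rw [hA, Matrix.add_apply, Matrix.sub_apply, Matrix.vecMulVec_apply, h1,
      Matrix.sub_apply, mul_sub, sub_mul, key]
    by_cases hij : i = j
    · subst hij
      rw [Matrix.diagonal_apply_eq, Matrix.one_apply_eq, mul_one,
        Real.mul_self_sqrt (le_of_lt (hfpos i))]
      ring
    · rw [Matrix.diagonal_apply_ne _ hij, Matrix.one_apply_ne hij, mul_zero, zero_mul]
      ring
  have hdet : IsUnit (1 - Es).det := (Matrix.isUnit_iff_isUnit_det _).1 hreg
  have h1 : (1 - Es) * (1 - Es)⁻¹ = 1 := Matrix.mul_nonsing_inv _ hdet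
  have h2 : (1 - Es)⁻¹ * (1 - Es) = 1 := Matrix.nonsing_inv_mul _ hdet
  have hAB : A * B = 1 := by
    rw [hAfact, hB]
    calc S * (1 - Es) * S * (Si * (1 - Es)⁻¹ * Si)
        = S * ((1 - Es) * ((S * Si) * ((1 - Es)⁻¹ * Si))) := by
          simp only [Matrix.mul_assoc]
      _ = S * ((1 - Es) * ((1 - Es)⁻¹ * Si)) := by rw [hSSi, Matrix.one_mul]
      _ = S * (((1 - Es) * (1 - Es)⁻¹) * Si) := by rw [Matrix.mul_assoc]
      _ = S * Si := by rw [h1, Matrix.one_mul]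
      _ = 1 := hSSi
  have hBA : B * A = 1 := by
    rw [hAfact, hB]
    calc Si * (1 - Es)⁻¹ * Si * (S * (1 - Es) * S)
        = Si * ((1 - Es)⁻¹ * ((Si * S) * ((1 - Es) * S))) := by
          simp only [Matrix.mul_assoc]
      _ = Si * ((1 - Es)⁻¹ * ((1 - Es) * S)) := by rw [hSiS, Matrix.one_mul]
      _ = Si * (((1 - Es)⁻¹ * (1 - Es)) * S) := by rw [Matrix.mul_assoc]
      _ = Si * S := by rw [h2, Matrix.one_mul]
      _ = 1 := hSiS
  -- A is symmetric
  have hAsymm : Aᵀ = A := by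
    ext i j
    rw [hA]
    simp only [Matrix.transpose_apply, Matrix.add_apply, Matrix.sub_apply,
      Matrix.diagonal_apply, Matrix.vecMulVec_apply]
    rw [hsym.apply i j]
    have : (if j = i then f j else 0) = (if i = j then f i else 0) := by
      by_cases h : i = j
      · subst h; simp
      · rw [if_neg h, if_neg (fun hji => h hji.symm)]
    rw [this]
    ring
  -- B is symmetric
  have hBsymm : ∀ i j, B i j = B j i := by
    have hABt : A * Bᵀ = 1 := by
      have := congrArg Matrix.transpose hBA
      rwa [Matrix.transpose_mul, hAsymm, Matrix.transpose_one] at this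
    have hBt : Bᵀ = B := by
      calc Bᵀ = 1 * Bᵀ := (Matrix.one_mul _).symm
        _ = (B * A) * Bᵀ := by rw [hBA]
        _ = B * (A * Bᵀ) := Matrix.mul_assoc _ _ _
        _ = B * 1 := by rw [hABt]
        _ = B := Matrix.mul_one _
    intro i j
    conv_rhs => rw [← hBt]
    rfl
  -- weighted column sums of B are 1 : f ᵥ* B = 1
  have honesA : (fun _ : Fin n => (1:ℝ)) ᵥ* A = f := by
    ext i
    simp only [Matrix.vecMul, dotProduct, one_mul]
    rw [hA]
    simp only [Matrix.add_apply, Matrix.sub_apply, Matrix.diagonal_apply,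
      Matrix.vecMulVec_apply]
    rw [Finset.sum_add_distrib, Finset.sum_sub_distrib]
    rw [Finset.sum_ite_eq' Finset.univ i f, if_pos (Finset.mem_univ i)]
    rw [hcolE i, ← Finset.sum_mul, hsumf]
    ring
  have hfB : ∀ j, ∑ i, f i * B i j = 1 := by
    have hv : f ᵥ* B = (fun _ : Fin n => (1:ℝ)) := by
      calc f ᵥ* B = ((fun _ : Fin n => (1:ℝ)) ᵥ* A) ᵥ* B := by rw [honesA]
        _ = (fun _ : Fin n => (1:ℝ)) ᵥ* (A * B) := Matrix.vecMul_vecMul _ _ _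
        _ = (fun _ : Fin n => (1:ℝ)) ᵥ* 1 := by rw [hAB]
        _ = (fun _ : Fin n => (1:ℝ)) := Matrix.vecMul_one _
    intro j
    have := congrFun hv j
    simpa [Matrix.vecMul, dotProduct] using this
  -- B *ᵥ f = 1
  have hBf : B *ᵥ f = (fun _ : Fin n => (1:ℝ)) := by
    have hAone : A *ᵥ (fun _ : Fin n => (1:ℝ)) = f := by
      ext i
      simp only [Matrix.mulVec, dotProduct, mul_one]
      rw [hA]
      simp only [Matrix.add_apply, Matrix.sub_apply, Matrix.diagonal_apply,
        Matrix.vecMulVec_apply]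
      rw [Finset.sum_add_distrib, Finset.sum_sub_distrib]
      rw [Finset.sum_ite_eq Finset.univ i (fun _ => f i), if_pos (Finset.mem_univ i)]
      rw [← hf i, ← Finset.mul_sum, hsumf]
      ring
    calc B *ᵥ f = B *ᵥ (A *ᵥ (fun _ : Fin n => (1:ℝ))) := by rw [hAone]
      _ = (B * A) *ᵥ (fun _ : Fin n => (1:ℝ)) := Matrix.mulVec_mulVec _ _ _
      _ = 1 *ᵥ (fun _ : Fin n => (1:ℝ)) := by rw [hBA]
      _ = (fun _ : Fin n => (1:ℝ)) := Matrix.one_mulVec _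
  -- the key identity: m i j = B j j - B i j
  have hmB : ∀ i j, m i j = B j j - B i j := by
    intro i₀ j
    set d : Fin n → ℝ := fun i => m i j - B j j + B i j with hd
    have hdj : d j = 0 := by simp [hd, hm0 j]
    -- off-diagonal entries of A * B give the value of (E B) i j
    have hEB : ∀ i, i ≠ j → ∑ k, E i k * B k j = f i + f i * B i j := by
      intro i hij
      have hABij := congrFun (congrFun hAB i) j
      rw [Matrix.mul_apply, hA] at hABij
      simp only [Matrix.add_apply, Matrix.sub_apply, Matrix.diagonal_apply,
        Matrix.vecMulVec_apply] at hABij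
      rw [Matrix.one_apply_ne hij] at hABij
      have hexp : ∀ k ∈ Finset.univ,
          ((if i = k then f i else 0) - E i k + f i * f k) * B k j
          = (if i = k then f i * B k j else 0) - E i k * B k j + f i * (f k * B k j) := by
        intro k _
        by_cases h : i = k
        · rw [if_pos h, if_pos h]; ring
        · rw [if_neg h, if_neg h]; ring
      rw [Finset.sum_congr rfl hexp, Finset.sum_add_distrib, Finset.sum_sub_distrib,
        Finset.sum_ite_eq Finset.univ i (fun k => f i * B k j),
        if_pos (Finset.mem_univ i), ← Finset.mul_sum, hfB j, mul_one] at hABij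
      linarith
    -- the balance quantity vanishes everywhere
    have hu : ∀ i, f i * d i - ∑ k, E i k * d k = 0 := by
      have huoff : ∀ i, i ≠ j → f i * d i - ∑ k, E i k * d k = 0 := by
        intro i hij
        have hfm : f i * m i j = f i + ∑ k, E i k * m k j := by
          rw [hmrec i j hij, mul_add, mul_one, Finset.mul_sum]
          congr 1
          refine Finset.sum_congr rfl (fun k _ => ?_)
          rw [← mul_assoc, mul_div_cancel₀ _ (hfne i)]
        have hsumd : ∑ k, E i k * d k
            = ∑ k, E i k * m k j - f i * B j j + (f i + f i * B i j) := by
          have : ∀ k ∈ Finset.univ, E i k * d k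
              = E i k * m k j - E i k * B j j + E i k * B k j := by
            intro k _; simp only [hd]; ring
          rw [Finset.sum_congr rfl this, Finset.sum_add_distrib, Finset.sum_sub_distrib,
            ← Finset.sum_mul, ← hf i, hEB i hij]
        have hdi : f i * d i = f i * m i j - f i * B j j + f i * B i j := by
          simp only [hd]; ring
        rw [hdi, hsumd]
        linarith
      intro i
      by_cases h : i = j
      · subst h
        -- total balance is zero, and all other terms vanish
        have htot : ∑ i', (f i' * d i' - ∑ k, E i' k * d k) = 0 := by
          rw [Finset.sum_sub_distrib]
          have hswap : ∑ i', ∑ k, E i' k * d k = ∑ k, f k * d k := by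
            rw [Finset.sum_comm]
            refine Finset.sum_congr rfl (fun k _ => ?_)
            rw [← Finset.sum_mul, hcolE k]
          rw [hswap]
          ring
        have hsingle : ∑ i', (f i' * d i' - ∑ k, E i' k * d k)
            = f i * d i - ∑ k, E i k * d k :=
          Finset.sum_eq_single_of_mem i (Finset.mem_univ i)
            (fun i' _ hne => huoff i' hne)
        rw [hsingle] at htot
        exact htot
      · exact huoff i h
    -- hence A *ᵥ d is a multiple of f
    set c : ℝ := ∑ k, f k * d k with hc
    have hAd : A *ᵥ d = c • f := by
      ext i
      simp only [Matrix.mulVec, dotProduct]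
      rw [hA]
      simp only [Matrix.add_apply, Matrix.sub_apply, Matrix.diagonal_apply,
        Matrix.vecMulVec_apply]
      have hexp : ∀ k ∈ Finset.univ,
          ((if i = k then f i else 0) - E i k + f i * f k) * d k
          = (if i = k then f i * d k else 0) - E i k * d k + f i * (f k * d k) := by
        intro k _
        by_cases h : i = k
        · rw [if_pos h, if_pos h]; ring
        · rw [if_neg h, if_neg h]; ring
      rw [Finset.sum_congr rfl hexp, Finset.sum_add_distrib, Finset.sum_sub_distrib,
        Finset.sum_ite_eq Finset.univ i (fun k => f i * d k),
        if_pos (Finset.mem_univ i), ← Finset.mul_sum, ← hc]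
      have := hu i
      simp only [Pi.smul_apply, smul_eq_mul]
      linarith [mul_comm c (f i)]
    have hdconst : d = fun _ : Fin n => c := by
      calc d = 1 *ᵥ d := (Matrix.one_mulVec d).symm
        _ = (B * A) *ᵥ d := by rw [hBA]
        _ = B *ᵥ (A *ᵥ d) := (Matrix.mulVec_mulVec _ _ _).symm
        _ = B *ᵥ (c • f) := by rw [hAd]
        _ = c • (B *ᵥ f) := Matrix.mulVec_smul _ _ _
        _ = c • (fun _ : Fin n => (1:ℝ)) := by rw [hBf]
        _ = fun _ : Fin n => c := by funext i; simp
    have hc0 : c = 0 := by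
      have := congrFun hdconst j
      rw [hdj] at this
      exact this.symm
    have hdi0 : d i₀ = 0 := by rw [hdconst, hc0]
    simp only [hd] at hdi0
    linarith
  intro i j
  rw [hDcom i j, hmB i j, hmB j i, hBsymm i j]
  ring
end
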